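/- The map m ↦ Q(m(r)dr), defined on the set of measurable functions m:(0,∞)→[0,1], is convex, and it is sequentially lower semicontinuous with respect to vague convergence of the associated measures: if m, m₁, m₂, … are measurable functions from (0,∞) to [0,1] such that ∫₀^∞ G(r) mₙ(r) dr → ∫₀^∞ G(r) m(r) dr for every continuous compactly supported G:(0,∞)→ℝ, then Q(m(r)dr) ≤ liminf_{n→∞} Q(mₙ(r)dr). -/

import Mathlib

/-!
Since `σ` is concave, `σ(a) = (1 - 2b) a + b² - (a - b)²` exhibits `σ` as the infimum of its tangent
lines, so for fixed `G` the expression inside the supremum is the supremum over `b` of functionals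
that are affine in `m`. Convexity follows by taking `b` to be the mixture itself. For lower
semicontinuity, the affine functional at a continuous `b` tests `m` only against `G'` and
`(1 - 2b) G²`, so it passes to the vague limit; and `b` can be chosen continuous with the gap
`∫ (m - b)² G²` as small as we like.
-/

open MeasureTheory Set Filter
open scoped ENNReal

noncomputable section

/-- `G` is continuously differentiable with compact support contained in `(0, ∞)`. -/
def IsC1K (G : ℝ → ℝ) : Prop :=
  ContDiff ℝ 1 G ∧ HasCompactSupport G ∧ tsupport G ⊆ Set.Ioi 0

/-- The expression inside the supremum defining the energy:
`-∫₀^∞ G'(r) m(r) dr - ∫₀^∞ σ(m(r)) G(r)² dr` with `σ(a) = a(1-a)`. -/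
def energyExpr (m G : ℝ → ℝ) : ℝ :=
  (- ∫ r in Set.Ioi (0:ℝ), deriv G r * m r)
    - ∫ r in Set.Ioi (0:ℝ), (m r * (1 - m r)) * (G r) ^ 2

/-- The energy functional `Q(m(r)dr)`, with values in `ℝ≥0∞`. -/
def energy (m : ℝ → ℝ) : ℝ≥0∞ :=
  ⨆ G : {G : ℝ → ℝ // IsC1K G}, ENNReal.ofReal (energyExpr m G.1)

open Topology

lemma MeasureTheory.IntegrableOn.bdd_mul_of_abs_le {α : Type*} [MeasurableSpace α]
    {μ : Measure α} {s : Set α} {φ f : α → ℝ} (hφ : IntegrableOn φ s μ) (hs : MeasurableSet s)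
    (hf : Measurable f) {C : ℝ} (hC : ∀ x ∈ s, |f x| ≤ C) : IntegrableOn (fun x => f x * φ x) s μ :=
  hφ.bdd_mul hf.aestronglyMeasurable (ae_restrict_of_forall_mem hs hC)

lemma MeasureTheory.IntegrableOn.mul_of_mem_Icc {α : Type*} [MeasurableSpace α] {μ : Measure α}
    {s : Set α} {φ f : α → ℝ} (hφ : IntegrableOn φ s μ) (hs : MeasurableSet s) (hf : Measurable f)
    (hf01 : ∀ x ∈ s, f x ∈ Icc (0:ℝ) 1) : IntegrableOn (fun x => φ x * f x) s μ :=
  hφ.mul_bdd hf.aestronglyMeasurable <| ae_restrict_of_forall_mem hs fun x hx =>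
    abs_le.2 ⟨by linarith [(hf01 x hx).1], (hf01 x hx).2⟩

lemma setIntegral_mul_add_mul {α : Type*} [MeasurableSpace α] {μ : Measure α} {s : Set α}
    {φ f g : α → ℝ} (hf : IntegrableOn (fun x => φ x * f x) s μ)
    (hg : IntegrableOn (fun x => φ x * g x) s μ) (a c : ℝ) :
    ∫ x in s, φ x * (a * f x + c * g x) ∂μ
      = a * ∫ x in s, φ x * f x ∂μ + c * ∫ x in s, φ x * g x ∂μ := by
  rw [← integral_const_mul, ← integral_const_mul, ← integral_add (hf.const_mul a) (hg.const_mul c)]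
  congr 1 with x
  ring

lemma ENNReal.ofReal_mul_add_mul_le {a c x y : ℝ} (ha : 0 ≤ a) (hc : 0 ≤ c) :
    ENNReal.ofReal (a * x + c * y)
      ≤ ENNReal.ofReal a * ENNReal.ofReal x + ENNReal.ofReal c * ENNReal.ofReal y := by
  rw [← ENNReal.ofReal_mul ha, ← ENNReal.ofReal_mul hc]
  exact ENNReal.ofReal_add_le

lemma HasCompactSupport.sq {G : ℝ → ℝ} (hGc : HasCompactSupport G) :
    HasCompactSupport (fun r => G r ^ 2) :=
  hGc.comp_left (g := fun x : ℝ => x ^ 2) (zero_pow two_ne_zero)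

lemma tsupport_sq_subset (G : ℝ → ℝ) : tsupport (fun r => G r ^ 2) ⊆ tsupport G :=
  tsupport_comp_subset (g := fun x : ℝ => x ^ 2) (zero_pow two_ne_zero) G

lemma HasCompactSupport.integrableOn_sq {G : ℝ → ℝ} (hGc : HasCompactSupport G)
    (hG : Continuous G) (s : Set ℝ) : IntegrableOn (fun r => G r ^ 2) s :=
  ((hG.pow 2).integrable_of_hasCompactSupport hGc.sq).integrableOn

lemma abs_sub_projIcc_le {x : ℝ} (hx : x ∈ Icc (0 : ℝ) 1) (y : ℝ) :
    |x - projIcc 0 1 zero_le_one y| ≤ |x - y| := by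
  simpa [projIcc_of_mem _ hx] using abs_projIcc_sub_projIcc (h := zero_le_one) (c := x) (d := y)

namespace IsC1K

variable {G : ℝ → ℝ}

lemma continuous (hG : IsC1K G) : Continuous G := hG.1.continuous

lemma hasCompactSupport (hG : IsC1K G) : HasCompactSupport G := hG.2.1

lemma continuous_deriv (hG : IsC1K G) : Continuous (deriv G) := hG.1.continuous_deriv le_rfl

lemma hasCompactSupport_deriv (hG : IsC1K G) : HasCompactSupport (deriv G) := hG.2.1.deriv

lemma tsupport_deriv_subset (hG : IsC1K G) : tsupport (deriv G) ⊆ Ioi 0 :=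
  _root_.tsupport_deriv_subset.trans hG.2.2

end IsC1K

lemma ofReal_energyExpr_le_energy {m G : ℝ → ℝ} (hG : IsC1K G) :
    ENNReal.ofReal (energyExpr m G) ≤ energy m :=
  le_iSup (fun G : {G : ℝ → ℝ // IsC1K G} => ENNReal.ofReal (energyExpr m G.1)) ⟨G, hG⟩

/-- `energyExpr` with `σ(m)` replaced by its tangent line `(1 - 2b) m + b²` at `b`; since `σ` is
concave this is a lower bound, and it is affine in `m`. -/
def tangentExpr (m G b : ℝ → ℝ) : ℝ :=
  (- ∫ r in Ioi (0:ℝ), deriv G r * m r) - (∫ r in Ioi (0:ℝ), (1 - 2 * b r) * G r ^ 2 * m r)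
    - ∫ r in Ioi (0:ℝ), b r ^ 2 * G r ^ 2

section Tangent

variable {m b G : ℝ → ℝ}

lemma integrableOn_one_sub_two_mul_mul_sq (hb : Measurable b)
    (hb01 : ∀ r ∈ Ioi (0:ℝ), b r ∈ Icc 0 1) (hG : Continuous G) (hGc : HasCompactSupport G) :
    IntegrableOn (fun r => (1 - 2 * b r) * G r ^ 2) (Ioi 0) :=
  (hGc.integrableOn_sq hG _).bdd_mul_of_abs_le (f := fun r => 1 - 2 * b r) measurableSet_Ioi
    (measurable_const.sub (hb.const_mul 2)) (C := 1) fun r hr => by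
      obtain ⟨h0, h1⟩ := hb01 r hr; rw [abs_le]; constructor <;> linarith

lemma energyExpr_eq_tangentExpr_add (hm : Measurable m) (hm01 : ∀ r ∈ Ioi (0:ℝ), m r ∈ Icc 0 1)
    (hb : Measurable b) (hb01 : ∀ r ∈ Ioi (0:ℝ), b r ∈ Icc 0 1)
    (hG : Continuous G) (hGc : HasCompactSupport G) :
    energyExpr m G = tangentExpr m G b + ∫ r in Ioi (0:ℝ), (m r - b r) ^ 2 * G r ^ 2 := by
  have hG2 : IntegrableOn (fun r => G r ^ 2) (Ioi 0) := hGc.integrableOn_sq hG _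
  have hσ : IntegrableOn (fun r => m r * (1 - m r) * G r ^ 2) (Ioi 0) :=
    hG2.bdd_mul_of_abs_le measurableSet_Ioi (hm.mul (measurable_const.sub hm)) (C := 1)
      fun r hr => by
        obtain ⟨h0, h1⟩ := hm01 r hr; rw [abs_le]; constructor <;> nlinarith
  have hdist : IntegrableOn (fun r => (m r - b r) ^ 2 * G r ^ 2) (Ioi 0) :=
    hG2.bdd_mul_of_abs_le measurableSet_Ioi ((hm.sub hb).pow_const 2) (C := 1) fun r hr => by
      obtain ⟨h0, h1⟩ := hm01 r hr; obtain ⟨h0', h1'⟩ := hb01 r hr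
      rw [abs_le]; constructor <;> nlinarith
  have hlin : IntegrableOn (fun r => (1 - 2 * b r) * G r ^ 2 * m r) (Ioi 0) :=
    (integrableOn_one_sub_two_mul_mul_sq hb hb01 hG hGc).mul_of_mem_Icc measurableSet_Ioi hm hm01
  have hconst : IntegrableOn (fun r => b r ^ 2 * G r ^ 2) (Ioi 0) :=
    hG2.bdd_mul_of_abs_le measurableSet_Ioi (hb.pow_const 2) (C := 1) fun r hr => by
      obtain ⟨h0, h1⟩ := hb01 r hr; rw [abs_le]; constructor <;> nlinarith
  have hsplit : (∫ r in Ioi (0:ℝ), m r * (1 - m r) * G r ^ 2)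
      + ∫ r in Ioi (0:ℝ), (m r - b r) ^ 2 * G r ^ 2
      = (∫ r in Ioi (0:ℝ), (1 - 2 * b r) * G r ^ 2 * m r)
        + ∫ r in Ioi (0:ℝ), b r ^ 2 * G r ^ 2 := by
    rw [← integral_add hσ hdist, ← integral_add hlin hconst]
    congr 1 with r
    ring
  rw [energyExpr, tangentExpr]
  linarith

lemma tangentExpr_le_energyExpr (hm : Measurable m) (hm01 : ∀ r ∈ Ioi (0:ℝ), m r ∈ Icc 0 1)
    (hb : Measurable b) (hb01 : ∀ r ∈ Ioi (0:ℝ), b r ∈ Icc 0 1)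
    (hG : Continuous G) (hGc : HasCompactSupport G) :
    tangentExpr m G b ≤ energyExpr m G := by
  rw [energyExpr_eq_tangentExpr_add hm hm01 hb hb01 hG hGc, le_add_iff_nonneg_right]
  exact setIntegral_nonneg measurableSet_Ioi fun r _ => by positivity

end Tangent

section Convexity

variable {m₁ m₂ b G : ℝ → ℝ}

lemma tangentExpr_convexComb (hm₁ : Measurable m₁) (hm₁01 : ∀ r ∈ Ioi (0:ℝ), m₁ r ∈ Icc 0 1)
    (hm₂ : Measurable m₂) (hm₂01 : ∀ r ∈ Ioi (0:ℝ), m₂ r ∈ Icc 0 1)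
    (hb : Measurable b) (hb01 : ∀ r ∈ Ioi (0:ℝ), b r ∈ Icc 0 1) (hG : IsC1K G) (t : ℝ) :
    tangentExpr (fun r => t * m₁ r + (1 - t) * m₂ r) G b
      = t * tangentExpr m₁ G b + (1 - t) * tangentExpr m₂ G b := by
  have hG' : IntegrableOn (deriv G) (Ioi 0) :=
    (hG.continuous_deriv.integrable_of_hasCompactSupport hG.hasCompactSupport_deriv).integrableOn
  have hslope := integrableOn_one_sub_two_mul_mul_sq hb hb01 hG.continuous hG.hasCompactSupport
  simp only [tangentExpr]
  rw [setIntegral_mul_add_mul (hG'.mul_of_mem_Icc measurableSet_Ioi hm₁ hm₁01)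
      (hG'.mul_of_mem_Icc measurableSet_Ioi hm₂ hm₂01),
    setIntegral_mul_add_mul (φ := fun r => (1 - 2 * b r) * G r ^ 2)
      (hslope.mul_of_mem_Icc measurableSet_Ioi hm₁ hm₁01)
      (hslope.mul_of_mem_Icc measurableSet_Ioi hm₂ hm₂01)]
  ring

lemma energyExpr_convexComb_le (hm₁ : Measurable m₁) (hm₁01 : ∀ r ∈ Ioi (0:ℝ), m₁ r ∈ Icc 0 1)
    (hm₂ : Measurable m₂) (hm₂01 : ∀ r ∈ Ioi (0:ℝ), m₂ r ∈ Icc 0 1) (hG : IsC1K G)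
    {t : ℝ} (ht0 : 0 ≤ t) (ht1 : t ≤ 1) :
    energyExpr (fun r => t * m₁ r + (1 - t) * m₂ r) G
      ≤ t * energyExpr m₁ G + (1 - t) * energyExpr m₂ G := by
  set mix : ℝ → ℝ := fun r => t * m₁ r + (1 - t) * m₂ r
  have hmix : Measurable mix := (hm₁.const_mul t).add (hm₂.const_mul (1 - t))
  have hmix01 : ∀ r ∈ Ioi (0:ℝ), mix r ∈ Icc 0 1 := fun r hr =>
    convex_Icc (0:ℝ) 1 (hm₁01 r hr) (hm₂01 r hr) ht0 (sub_nonneg.2 ht1) (by ring)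
  have hcont := hG.continuous
  have hcpt := hG.hasCompactSupport
  calc energyExpr mix G = tangentExpr mix G mix := by
        simp [energyExpr_eq_tangentExpr_add hmix hmix01 hmix hmix01 hcont hcpt]
    _ = t * tangentExpr m₁ G mix + (1 - t) * tangentExpr m₂ G mix :=
        tangentExpr_convexComb hm₁ hm₁01 hm₂ hm₂01 hmix hmix01 hG t
    _ ≤ t * energyExpr m₁ G + (1 - t) * energyExpr m₂ G := by
        have := sub_nonneg.2 ht1
        gcongr
        · exact tangentExpr_le_energyExpr hm₁ hm₁01 hmix hmix01 hcont hcpt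
        · exact tangentExpr_le_energyExpr hm₂ hm₂01 hmix hmix01 hcont hcpt

end Convexity

theorem energy_convexComb_le (m₁ m₂ : ℝ → ℝ) (hm₁ : Measurable m₁) (hm₂ : Measurable m₂)
    (hm₁01 : ∀ r ∈ Ioi (0:ℝ), m₁ r ∈ Icc 0 1) (hm₂01 : ∀ r ∈ Ioi (0:ℝ), m₂ r ∈ Icc 0 1)
    (t : ℝ) (ht0 : 0 ≤ t) (ht1 : t ≤ 1) :
    energy (fun r => t * m₁ r + (1 - t) * m₂ r)
      ≤ ENNReal.ofReal t * energy m₁ + ENNReal.ofReal (1 - t) * energy m₂ :=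
  iSup_le fun ⟨G, hG⟩ => calc
    _ ≤ ENNReal.ofReal (t * energyExpr m₁ G + (1 - t) * energyExpr m₂ G) :=
        ENNReal.ofReal_le_ofReal (energyExpr_convexComb_le hm₁ hm₁01 hm₂ hm₂01 hG ht0 ht1)
    _ ≤ ENNReal.ofReal t * ENNReal.ofReal (energyExpr m₁ G)
          + ENNReal.ofReal (1 - t) * ENNReal.ofReal (energyExpr m₂ G) :=
        ENNReal.ofReal_mul_add_mul_le ht0 (sub_nonneg.2 ht1)
    _ ≤ ENNReal.ofReal t * energy m₁ + ENNReal.ofReal (1 - t) * energy m₂ := by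
        gcongr <;> exact ofReal_energyExpr_le_energy hG

/-- The weight `G²` confines the error to the compact set `tsupport G`, where `m` is integrable and
can be approximated in `L¹` by a continuous function; clamping to `[0, 1]` only reduces the error,
and `(m - b)² ≤ |m - b|` there. -/
lemma exists_continuous_integral_sq_sub_mul_sq_le {m G : ℝ → ℝ} {s : Set ℝ}
    (hs : MeasurableSet s) (hm : Measurable m) (hm01 : ∀ r ∈ s, m r ∈ Icc (0:ℝ) 1)
    (hG : Continuous G) (hGc : HasCompactSupport G) {ε : ℝ} (hε : 0 < ε) :
    ∃ b : ℝ → ℝ, Continuous b ∧ (∀ r, b r ∈ Icc (0:ℝ) 1) ∧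
      ∫ r in s, (m r - b r) ^ 2 * G r ^ 2 ≤ ε := by
  obtain ⟨C, hC⟩ := hG.bounded_above_of_compact_support hGc
  have hC2 : ∀ r, G r ^ 2 ≤ C ^ 2 := fun r => by
    simpa only [Real.norm_eq_abs, sq_abs] using pow_le_pow_left₀ (abs_nonneg _) (hC r) 2
  set K := s ∩ tsupport G
  have hK : MeasurableSet K := hs.inter (isClosed_tsupport G).measurableSet
  have hmK : Integrable (K.indicator m) := by
    refine (Measure.integrableOn_of_bounded (M := 1) ?_ hm.aestronglyMeasurable ?_
      ).integrable_indicator hK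
    · exact (measure_mono inter_subset_right).trans_lt hGc.isCompact.measure_lt_top |>.ne
    · exact ae_restrict_of_forall_mem hK fun r hr =>
        abs_le.2 ⟨by linarith [(hm01 r hr.1).1], (hm01 r hr.1).2⟩
  obtain ⟨g, -, hg, hgc, hgi⟩ :=
    hmK.exists_hasCompactSupport_integral_sub_le (ε := ε / (C ^ 2 + 1)) (by positivity)
  set b : ℝ → ℝ := fun r => projIcc (0:ℝ) 1 zero_le_one (g r)
  have hbc : Continuous b :=
    continuous_subtype_val.comp ((continuous_projIcc (h := zero_le_one)).comp hgc)
  refine ⟨b, hbc, fun r => Subtype.prop _, ?_⟩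
  have hpt : ∀ r ∈ s, (m r - b r) ^ 2 * G r ^ 2
      ≤ C ^ 2 * |K.indicator m r - g r| := by
    intro r hr
    by_cases hrG : r ∈ tsupport G
    · have hb : b r ∈ Icc (0:ℝ) 1 := Subtype.prop _
      have hle1 : |m r - b r| ≤ 1 := abs_le.2
        ⟨by linarith [(hm01 r hr).1, hb.2], by linarith [(hm01 r hr).2, hb.1]⟩
      have hsq : (m r - b r) ^ 2 ≤ |m r - g r| := by
        rw [← sq_abs, sq]
        exact (mul_le_of_le_one_left (abs_nonneg _) hle1).trans
          (abs_sub_projIcc_le (hm01 r hr) (g r))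
      rw [indicator_of_mem (show r ∈ K from ⟨hr, hrG⟩), mul_comm (C ^ 2)]
      exact mul_le_mul hsq (hC2 r) (sq_nonneg _) (abs_nonneg _)
    · rw [image_eq_zero_of_notMem_tsupport hrG, zero_pow two_ne_zero, mul_zero]
      positivity
  calc ∫ r in s, (m r - b r) ^ 2 * G r ^ 2
      ≤ ∫ r in s, C ^ 2 * |K.indicator m r - g r| :=
        integral_mono_of_nonneg (.of_forall fun r => by positivity)
          ((hmK.sub hgi).abs.const_mul _).integrableOn (ae_restrict_of_forall_mem hs hpt)
    _ ≤ ∫ r, C ^ 2 * |K.indicator m r - g r| :=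
        setIntegral_le_integral ((hmK.sub hgi).abs.const_mul _) (.of_forall fun r => by positivity)
    _ ≤ C ^ 2 * (ε / (C ^ 2 + 1)) := by
        rw [integral_const_mul]
        exact mul_le_mul_of_nonneg_left hg (sq_nonneg C)
    _ ≤ ε := by
        rw [mul_div_assoc']
        exact (div_le_iff₀ (by positivity)).2 (by nlinarith)

def TendstoVaguely (ms : ℕ → ℝ → ℝ) (m : ℝ → ℝ) : Prop :=
  ∀ G : ℝ → ℝ, Continuous G → HasCompactSupport G → tsupport G ⊆ Ioi 0 →
    Tendsto (fun n => ∫ r in Ioi (0:ℝ), G r * ms n r) atTop (𝓝 (∫ r in Ioi (0:ℝ), G r * m r))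

lemma TendstoVaguely.tendsto_tangentExpr {ms : ℕ → ℝ → ℝ} {m G b : ℝ → ℝ}
    (hconv : TendstoVaguely ms m) (hG : IsC1K G) (hb : Continuous b) :
    Tendsto (fun n => tangentExpr (ms n) G b) atTop (𝓝 (tangentExpr m G b)) := by
  have hderiv := hconv (deriv G) hG.continuous_deriv hG.hasCompactSupport_deriv
    hG.tsupport_deriv_subset
  have hslope : Tendsto (fun n => ∫ r in Ioi (0:ℝ), (1 - 2 * b r) * G r ^ 2 * ms n r) atTop
      (𝓝 (∫ r in Ioi (0:ℝ), (1 - 2 * b r) * G r ^ 2 * m r)) :=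
    hconv (fun r => (1 - 2 * b r) * G r ^ 2)
    ((continuous_const.sub (continuous_const.mul hb)).mul (hG.continuous.pow 2))
    hG.hasCompactSupport.sq.mul_left
    (tsupport_mul_subset_right.trans ((tsupport_sq_subset G).trans hG.2.2))
  exact (hderiv.neg.sub hslope).sub tendsto_const_nhds

theorem energy_le_liminf (m : ℝ → ℝ) (ms : ℕ → ℝ → ℝ) (hm : Measurable m)
    (hm01 : ∀ r ∈ Ioi (0:ℝ), m r ∈ Icc 0 1) (hms : ∀ n, Measurable (ms n))
    (hms01 : ∀ n, ∀ r ∈ Ioi (0:ℝ), ms n r ∈ Icc 0 1) (hconv : TendstoVaguely ms m) :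
    energy m ≤ liminf (fun n => energy (ms n)) atTop := by
  refine iSup_le fun ⟨G, hG⟩ => ENNReal.le_of_forall_pos_le_add fun ε hε _ => ?_
  obtain ⟨b, hbc, hb01, hbm⟩ := exists_continuous_integral_sq_sub_mul_sq_le measurableSet_Ioi hm
    hm01 hG.continuous hG.hasCompactSupport (ε := ε) hε
  have hlim := ((ENNReal.continuous_ofReal.tendsto _).comp
    (hconv.tendsto_tangentExpr hG hbc)).liminf_eq
  have hle (n : ℕ) : ENNReal.ofReal (tangentExpr (ms n) G b) ≤ energy (ms n) :=
    (ENNReal.ofReal_le_ofReal (tangentExpr_le_energyExpr (hms n) (hms01 n) hbc.measurable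
      (fun r _ => hb01 r) hG.continuous hG.hasCompactSupport)).trans
      (ofReal_energyExpr_le_energy hG)
  calc ENNReal.ofReal (energyExpr m G)
      ≤ ENNReal.ofReal (tangentExpr m G b + ε) := by
        rw [energyExpr_eq_tangentExpr_add hm hm01 hbc.measurable (fun r _ => hb01 r) hG.continuous
          hG.hasCompactSupport]
        gcongr
    _ ≤ ENNReal.ofReal (tangentExpr m G b) + ε :=
        ENNReal.ofReal_add_le.trans_eq (by rw [ENNReal.ofReal_coe_nnreal])
    _ ≤ liminf (fun n => energy (ms n)) atTop + ε := by
        gcongr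
        rw [← hlim]
        exact liminf_le_liminf (.of_forall hle)

theorem stmt1 :
    (∀ m₁ m₂ : ℝ → ℝ, Measurable m₁ → Measurable m₂ →
      (∀ r ∈ Set.Ioi (0:ℝ), m₁ r ∈ Set.Icc (0:ℝ) 1) →
      (∀ r ∈ Set.Ioi (0:ℝ), m₂ r ∈ Set.Icc (0:ℝ) 1) →
      ∀ t : ℝ, 0 ≤ t → t ≤ 1 →
        energy (fun r => t * m₁ r + (1 - t) * m₂ r)
          ≤ ENNReal.ofReal t * energy m₁ + ENNReal.ofReal (1 - t) * energy m₂) ∧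
    (∀ (m : ℝ → ℝ) (ms : ℕ → ℝ → ℝ), Measurable m →
      (∀ r ∈ Set.Ioi (0:ℝ), m r ∈ Set.Icc (0:ℝ) 1) →
      (∀ n, Measurable (ms n)) →
      (∀ n, ∀ r ∈ Set.Ioi (0:ℝ), ms n r ∈ Set.Icc (0:ℝ) 1) →
      (∀ G : ℝ → ℝ, Continuous G → HasCompactSupport G → tsupport G ⊆ Set.Ioi 0 →
        Tendsto (fun n => ∫ r in Set.Ioi (0:ℝ), G r * ms n r) atTop
          (nhds (∫ r in Set.Ioi (0:ℝ), G r * m r))) →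
      energy m ≤ Filter.liminf (fun n => energy (ms n)) atTop) :=
  ⟨energy_convexComb_le, energy_le_liminf⟩
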